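/- arXiv:2403.13161 — 5 statements merged into one kernel-verified Lean document; each statement's English description precedes it below -/
import Mathlib

section
/- For every real number a, e^a - a - 1 ≤ 3 · Σ_{r=1}^∞ |a|^{2r}/(2r)!. -/
open Real

theorem Real.hasSum_cosh_sub_one (x : ℝ) :
    HasSum (fun r : ℕ => x ^ (2 * (r + 1)) / (Nat.factorial (2 * (r + 1)) : ℝ)) (cosh x - 1) := by
  simpa using (hasSum_nat_add_iff' (f := fun n : ℕ => x ^ (2 * n) / ((2 * n).factorial : ℝ)) 1).2
    (hasSum_cosh x)

/- `3 (cosh a - 1) - (eᵃ - a - 1) = (eᵃ - a - 1) / 2 + 3 (e⁻ᵃ - (1 - a)) / 2`, and both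
brackets are nonnegative by `1 + x ≤ eˣ`. -/
theorem Real.exp_sub_sub_one_le_three_mul_cosh_sub_one (a : ℝ) :
    exp a - a - 1 ≤ 3 * (cosh a - 1) := by
  rw [cosh_eq]
  linarith [add_one_le_exp a, add_one_le_exp (-a)]

/-- For every real `a`, `e^a - a - 1 ≤ 3 * ∑_{r=1}^∞ |a|^(2r)/(2r)!`. -/
theorem exp_sub_le_three_tsum_even (a : ℝ) :
    Real.exp a - a - 1 ≤ 3 * ∑' r : ℕ, |a| ^ (2 * (r + 1)) / (Nat.factorial (2 * (r + 1))) := by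
  rw [(hasSum_cosh_sub_one |a|).tsum_eq, cosh_abs]
  exact exp_sub_sub_one_le_three_mul_cosh_sub_one a
end

section
/- Finite-time bound from the generating function hierarchy: Under the assumptions of the generating-function ODE lemma with c1 > c2 > 0 and M2 > 0, set T_* = (1 − c2/c1)/M2. Then for every t < min(T_*, T) and every k ∈ [N], x^k(t) ≤ (c1/c2)^k · ( C0 / (1 − M2 t − c2/c1)^3 + M3 / (M2 (1 − M2 t − c2/c1)^2) ) · 1/N^2. -/
/-!
Fix `t` and follow the generating function `G s = ∑ ρ(s)^k x^k(s)` along the characteristic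
`ρ(s) = c2/c1 + M2 (t - s)`. Since `ρ ≥ c2/c1`, the loss `-c1 y^k` absorbs the gain
`c2 y^(k+1)` passed down from the next index, and the decay `ρ' = -M2` absorbs the transport term
`M2 k x^(k+1)`; what is left of `G'` is the source, at most `2 M3 / (N² (1 - ρ)³)`, whose
integral is at most `M3 / (M2 N² (1 - ρ(0))²)`. The initial bound controls `G 0`, and at `s = t`
the single term `(c2/c1)^k x^k(t)` is at most `G t`.
-/

open Finset

theorem sum_Icc_sq_mul_pow_le (N : ℕ) {r : ℝ} (hr₀ : 0 ≤ r) (hr₁ : r < 1) :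
    ∑ k ∈ Icc 1 N, (k : ℝ) ^ 2 * r ^ k ≤ 2 / (1 - r) ^ 3 := by
  have hsum := hasSum_choose_mul_geometric_of_norm_lt_one (𝕜 := ℝ) 2
    (by rwa [Real.norm_eq_abs, abs_of_nonneg hr₀])
  calc ∑ k ∈ Icc 1 N, (k : ℝ) ^ 2 * r ^ k
      ≤ ∑ k ∈ Icc 1 N, 2 * (((k + 2).choose 2 : ℕ) * r ^ k) := by
        refine sum_le_sum fun k _ => ?_
        rw [← mul_assoc]
        refine mul_le_mul_of_nonneg_right ?_ (pow_nonneg hr₀ k)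
        rw [Nat.cast_choose_two]
        push_cast
        nlinarith [k.cast_nonneg (α := ℝ)]
    _ ≤ ∑' k : ℕ, 2 * (((k + 2).choose 2 : ℕ) * r ^ k) :=
        (hsum.mul_left 2).summable.sum_le_tsum _ fun k _ => by positivity
    _ = 2 / (1 - r) ^ 3 := by rw [(hsum.mul_left 2).tsum_eq]; ring

theorem sum_Icc_ite_lt_succ_le {M : Type*} [AddCommMonoid M] [PartialOrder M]
    [IsOrderedAddMonoid M] {N : ℕ} {u : ℕ → M} (hu : ∀ k ∈ Icc 1 N, 0 ≤ u k) :
    ∑ k ∈ Icc 1 N, (if k < N then u (k + 1) else 0) ≤ ∑ k ∈ Icc 1 N, u k := by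
  have hfilter : (Icc 1 N).filter (· < N) = Ico 1 N := by
    ext k; simp only [mem_filter, mem_Icc, mem_Ico]; omega
  rw [← sum_filter, hfilter, sum_Ico_add']
  exact sum_le_sum_of_subset_of_nonneg
    (fun k hk => by simp only [mem_Ico, mem_Icc] at hk ⊢; omega) fun k hk _ => hu k hk

theorem sum_pow_mul_hierarchy_le {N : ℕ} {c1 c2 M2 ρ : ℝ} (hc2 : 0 ≤ c2) (hM2 : 0 ≤ M2)
    (hρ : 0 ≤ ρ) (hρc : c2 ≤ c1 * ρ) {x y x' f : ℕ → ℝ}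
    (hx : ∀ k ∈ Icc 1 N, 0 ≤ x k) (hy : ∀ k ∈ Icc 1 N, 0 ≤ y k)
    (hineq : ∀ k ∈ Icc 1 N, x' k ≤ -c1 * y k + (if k < N then c2 * y (k + 1) else 0)
      + (if k < N then M2 * k * x (k + 1) else 0) + f k) :
    ∑ k ∈ Icc 1 N, ((k : ℝ) * ρ ^ (k - 1) * (-M2) * x k + ρ ^ k * x' k)
      ≤ ∑ k ∈ Icc 1 N, ρ ^ k * f k := by
  -- `u (k + 1)` is the gain of index `k`; shifted to index `k + 1` it is absorbed by `v (k + 1)`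
  set u : ℕ → ℝ := fun k => ρ ^ (k - 1) * (c2 * y k + M2 * ((k : ℝ) - 1) * x k)
  set v : ℕ → ℝ := fun k => (k : ℝ) * ρ ^ (k - 1) * (-M2) * x k + ρ ^ k * (-c1 * y k)
  have hu : ∀ k ∈ Icc 1 N, 0 ≤ u k := fun k hk => by
    have hk1 : (1 : ℝ) ≤ k := by exact_mod_cast (mem_Icc.1 hk).1
    have := hx k hk; have := hy k hk
    have : 0 ≤ (k : ℝ) - 1 := by linarith
    positivity
  have hvu : ∀ k ∈ Icc 1 N, v k + u k ≤ 0 := fun k hk => by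
    obtain ⟨j, rfl⟩ : ∃ j, k = j + 1 := ⟨k - 1, by have := (mem_Icc.1 hk).1; omega⟩
    have hxk := hx _ hk; have hyk := hy _ hk
    have hloss : v (j + 1) + u (j + 1)
        = -(M2 * (ρ ^ j * x (j + 1))) - (c1 * ρ - c2) * (ρ ^ j * y (j + 1)) := by
      simp only [v, u, Nat.add_sub_cancel]; push_cast; ring
    rw [hloss]
    have := mul_nonneg hM2 (mul_nonneg (pow_nonneg hρ j) hxk)
    have := mul_nonneg (sub_nonneg.2 hρc) (mul_nonneg (pow_nonneg hρ j) hyk)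
    linarith
  calc ∑ k ∈ Icc 1 N, ((k : ℝ) * ρ ^ (k - 1) * (-M2) * x k + ρ ^ k * x' k)
      ≤ ∑ k ∈ Icc 1 N, (v k + (if k < N then u (k + 1) else 0) + ρ ^ k * f k) := by
        refine sum_le_sum fun k hk => ?_
        have hgain : ρ ^ k * ((if k < N then c2 * y (k + 1) else 0)
            + (if k < N then M2 * k * x (k + 1) else 0)) = if k < N then u (k + 1) else 0 := by
          split_ifs
          · simp only [u, Nat.add_sub_cancel]; push_cast; ring
          · ring
        have := mul_le_mul_of_nonneg_left (hineq k hk) (pow_nonneg hρ k)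
        simp only [v]
        linarith
    _ ≤ ∑ k ∈ Icc 1 N, (v k + u k) + ∑ k ∈ Icc 1 N, ρ ^ k * f k := by
        simp only [sum_add_distrib]
        linarith [sum_Icc_ite_lt_succ_le hu]
    _ ≤ ∑ k ∈ Icc 1 N, ρ ^ k * f k := by
        linarith [sum_nonpos hvu]

theorem le_add_div_sq_of_hasDerivAt_le {f f' : ℝ → ℝ} {a b M t : ℝ} (ht : 0 ≤ t) (ha : 0 < a)
    (hb : 0 ≤ b) (hM : 0 ≤ M) (hf : ∀ s ∈ Set.Icc 0 t, HasDerivAt f (f' s) s)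
    (hf' : ∀ s ∈ Set.Icc 0 t, f' s ≤ 2 * M * b / (a + b * s) ^ 3) :
    f t ≤ f 0 + M / a ^ 2 := by
  have hpos : ∀ s ∈ Set.Icc 0 t, 0 < a + b * s := fun s hs => by nlinarith [hs.1]
  have hB : ∀ s ∈ Set.Icc 0 t, HasDerivAt (fun σ => f 0 + M / a ^ 2 - M * ((a + b * σ) ^ 2)⁻¹)
      (2 * M * b / (a + b * s) ^ 3) s := fun s hs => by
    have hlin : HasDerivAt (fun σ => a + b * σ) b s := by
      simpa using ((hasDerivAt_id s).const_mul b).const_add a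
    refine (((hlin.fun_pow 2).fun_inv (pow_pos (hpos s hs) 2).ne').const_mul M).const_sub
      (f 0 + M / a ^ 2) |>.congr_deriv ?_
    have := (hpos s hs).ne'
    field_simp
    ring
  have hcomp := image_le_of_deriv_right_le_deriv_boundary
    (fun s hs => (hf s hs).continuousAt.continuousWithinAt)
    (fun s hs => (hf s (Set.Ico_subset_Icc_self hs)).hasDerivWithinAt)
    (by simp [div_eq_mul_inv]) (fun s hs => (hB s hs).continuousAt.continuousWithinAt)
    (fun s hs => (hB s (Set.Ico_subset_Icc_self hs)).hasDerivWithinAt)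
    (fun s hs => hf' s (Set.Ico_subset_Icc_self hs)) (Set.right_mem_Icc.2 ht)
  have := mul_nonneg hM (inv_nonneg.2 (sq_nonneg (a + b * t)))
  linarith

noncomputable def genFun (N : ℕ) (x : ℕ → ℝ → ℝ) (r s : ℝ) : ℝ :=
  ∑ k ∈ Icc 1 N, r ^ k * x k s

theorem hasDerivAt_genFun_comp {N : ℕ} {x x' : ℕ → ℝ → ℝ} {r : ℝ → ℝ} {r' s : ℝ}
    (hr : HasDerivAt r r' s) (hx : ∀ k ∈ Icc 1 N, HasDerivAt (x k) (x' k s) s) :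
    HasDerivAt (fun σ => genFun N x (r σ) σ)
      (∑ k ∈ Icc 1 N, ((k : ℝ) * r s ^ (k - 1) * r' * x k s + r s ^ k * x' k s)) s :=
  HasDerivAt.fun_sum fun k hk => (hr.pow k).mul (hx k hk)

theorem genFun_le_of_hierarchy {N : ℕ} {t c1 c2 M2 M3 q : ℝ} (ht : 0 ≤ t) (hc2 : 0 ≤ c2)
    (hq : 0 ≤ q) (hc1 : 0 ≤ c1) (hqc : c2 ≤ c1 * q) (hM2 : 0 < M2) (hM3 : 0 ≤ M3)
    (hqt : q + M2 * t < 1) {x y x' : ℕ → ℝ → ℝ}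
    (hx : ∀ k ∈ Icc 1 N, ∀ s ∈ Set.Icc 0 t, 0 ≤ x k s)
    (hy : ∀ k ∈ Icc 1 N, ∀ s ∈ Set.Icc 0 t, 0 ≤ y k s)
    (hderiv : ∀ k ∈ Icc 1 N, ∀ s ∈ Set.Icc 0 t, HasDerivAt (x k) (x' k s) s)
    (hineq : ∀ s ∈ Set.Icc 0 t, ∀ k ∈ Icc 1 N,
      x' k s ≤ -c1 * y k s + (if k < N then c2 * y (k + 1) s else 0)
        + (if k < N then M2 * k * x (k + 1) s else 0) + M3 * (k : ℝ) ^ 2 / (N : ℝ) ^ 2) :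
    genFun N x q t ≤ genFun N x (q + M2 * t) 0 + M3 / (M2 * N ^ 2 * (1 - (q + M2 * t)) ^ 2) := by
  have hchar : ∀ s ∈ Set.Icc 0 t, HasDerivAt (fun σ => q + M2 * (t - σ)) (-M2) s := fun s _ => by
    simpa using ((hasDerivAt_id s).const_sub t).const_mul M2 |>.const_add q
  have hbound := le_add_div_sq_of_hasDerivAt_le (a := 1 - (q + M2 * t))
    (M := M3 / (M2 * N ^ 2)) ht (by linarith) hM2.le
    (div_nonneg hM3 (by positivity)) (fun s hs =>
      hasDerivAt_genFun_comp (hchar s hs) fun k hk => hderiv k hk s hs) fun s hs => by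
    have hρ : q ≤ q + M2 * (t - s) := by nlinarith [hs.2]
    have hρ₁ : q + M2 * (t - s) < 1 := by nlinarith [hs.1]
    calc _ ≤ ∑ k ∈ Icc 1 N, (q + M2 * (t - s)) ^ k * (M3 * (k : ℝ) ^ 2 / (N : ℝ) ^ 2) :=
          sum_pow_mul_hierarchy_le hc2 hM2.le (hq.trans hρ)
            (hqc.trans (mul_le_mul_of_nonneg_left hρ hc1)) (fun k hk => hx k hk s hs)
            (fun k hk => hy k hk s hs) (hineq s hs)
      _ = M3 / N ^ 2 * ∑ k ∈ Icc 1 N, (k : ℝ) ^ 2 * (q + M2 * (t - s)) ^ k := by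
          rw [mul_sum]; exact sum_congr rfl fun k _ => by ring
      _ ≤ M3 / N ^ 2 * (2 / (1 - (q + M2 * (t - s))) ^ 3) := by
          gcongr
          exact sum_Icc_sq_mul_pow_le N (hq.trans hρ) hρ₁
      _ = 2 * (M3 / (M2 * N ^ 2)) * M2 / (1 - (q + M2 * t) + M2 * s) ^ 3 := by
          field_simp
          ring
  rwa [sub_self, mul_zero, add_zero, sub_zero, div_div] at hbound

theorem generating_function_finite_time_bound_general
    (N : ℕ) (T : ℝ)
    (c1 c2 M2 M3 C0 : ℝ) (hc : c1 > c2) (hc2 : c2 > 0)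
    (hM2 : 0 < M2) (hM3 : 0 ≤ M3)
    (x y x' : ℕ → ℝ → ℝ)
    (hx0 : ∀ k ∈ Finset.Icc 1 N, ∀ t ∈ Set.Icc (0 : ℝ) T, 0 ≤ x k t)
    (hy0 : ∀ k ∈ Finset.Icc 1 N, ∀ t ∈ Set.Icc (0 : ℝ) T, 0 ≤ y k t)
    (hderiv : ∀ k ∈ Finset.Icc 1 N, ∀ t ∈ Set.Icc (0 : ℝ) T,
      HasDerivAt (fun s => x k s) (x' k t) t)
    (hinit : ∀ r : ℝ, r ∈ Set.Ico (0 : ℝ) 1 →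
      ∑ k ∈ Finset.Icc 1 N, r ^ k * x k 0 ≤ C0 / ((N : ℝ) ^ 2 * (1 - r) ^ 3))
    (hineq : ∀ t ∈ Set.Icc (0 : ℝ) T, ∀ k ∈ Finset.Icc 1 N,
      x' k t ≤ -c1 * y k t + (if k < N then c2 * y (k + 1) t else 0)
        + (if k < N then M2 * k * x (k + 1) t else 0)
        + M3 * (k : ℝ) ^ 2 / (N : ℝ) ^ 2) :
    ∀ t : ℝ, 0 ≤ t → t < min ((1 - c2 / c1) / M2) T → ∀ k ∈ Finset.Icc 1 N,
      x k t ≤ (c1 / c2) ^ k *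
        (C0 / (1 - M2 * t - c2 / c1) ^ 3
          + M3 / (M2 * (1 - M2 * t - c2 / c1) ^ 2)) / (N : ℝ) ^ 2 := by
  intro t ht htlt k hk
  have hc1 : 0 < c1 := hc2.trans hc
  have hq : 0 < c2 / c1 := div_pos hc2 hc1
  have hqt : c2 / c1 + M2 * t < 1 := by
    have := (lt_div_iff₀' hM2).1 (htlt.trans_le (min_le_left _ _))
    linarith
  have hsub : Set.Icc 0 t ⊆ Set.Icc 0 T :=
    Set.Icc_subset_Icc_right (htlt.trans_le (min_le_right _ _)).le
  have hgen := genFun_le_of_hierarchy ht hc2.le hq.le hc1.le (mul_div_cancel₀ c2 hc1.ne').ge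
    hM2 hM3 hqt (fun k hk s hs => hx0 k hk s (hsub hs)) (fun k hk s hs => hy0 k hk s (hsub hs))
    (fun k hk s hs => hderiv k hk s (hsub hs)) fun s hs => hineq s (hsub hs)
  have hG0 : genFun N x (c2 / c1 + M2 * t) 0 ≤ _ := hinit (c2 / c1 + M2 * t) ⟨by positivity, hqt⟩
  have hterm : (c2 / c1) ^ k * x k t ≤ genFun N x (c2 / c1) t :=
    single_le_sum (f := fun j => (c2 / c1) ^ j * x j t)
      (fun j hj => mul_nonneg (pow_nonneg hq.le j) (hx0 j hj t (hsub ⟨ht, le_rfl⟩))) hk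
  rw [mul_div_assoc, show (c1 / c2) ^ k = ((c2 / c1) ^ k)⁻¹ by rw [← inv_pow, inv_div],
    le_inv_mul_iff₀ (pow_pos hq k), show 1 - M2 * t - c2 / c1 = 1 - (c2 / c1 + M2 * t) by ring]
  generalize 1 - (c2 / c1 + M2 * t) = a at hgen hG0 ⊢
  calc (c2 / c1) ^ k * x k t ≤ C0 / ((N : ℝ) ^ 2 * a ^ 3) + M3 / (M2 * N ^ 2 * a ^ 2) := by
        linarith
    _ = _ := by ring

/-- Finite-time bound from the generating function hierarchy: with
`T_* = (1 - c2/c1)/M2`, for `t < min(T_*, T)` and `k ∈ [N]`,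
`x^k(t) ≤ (c1/c2)^k (C0/(1 - M2 t - c2/c1)^3 + M3/(M2 (1 - M2 t - c2/c1)^2))/N²`. -/
theorem generating_function_finite_time_bound
    (N : ℕ) (hN : 1 ≤ N) (T : ℝ) (hT : 0 < T)
    (c1 c2 M2 M3 C0 : ℝ) (hc : c1 > c2) (hc2 : c2 > 0)
    (hM2 : 0 < M2) (hM3 : 0 ≤ M3) (hC0 : 0 ≤ C0)
    (x y x' : ℕ → ℝ → ℝ)
    (hx0 : ∀ k ∈ Finset.Icc 1 N, ∀ t ∈ Set.Icc (0 : ℝ) T, 0 ≤ x k t)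
    (hy0 : ∀ k ∈ Finset.Icc 1 N, ∀ t ∈ Set.Icc (0 : ℝ) T, 0 ≤ y k t)
    (hderiv : ∀ k ∈ Finset.Icc 1 N, ∀ t ∈ Set.Icc (0 : ℝ) T,
      HasDerivAt (fun s => x k s) (x' k t) t)
    (hcont : ∀ k ∈ Finset.Icc 1 N, ContinuousOn (fun t => x' k t) (Set.Icc (0 : ℝ) T))
    (hinit : ∀ r : ℝ, r ∈ Set.Ico (0 : ℝ) 1 →
      ∑ k ∈ Finset.Icc 1 N, r ^ k * x k 0 ≤ C0 / ((N : ℝ) ^ 2 * (1 - r) ^ 3))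
    (hineq : ∀ t ∈ Set.Icc (0 : ℝ) T, ∀ k ∈ Finset.Icc 1 N,
      x' k t ≤ -c1 * y k t + (if k < N then c2 * y (k + 1) t else 0)
        + (if k < N then M2 * k * x (k + 1) t else 0)
        + M3 * (k : ℝ) ^ 2 / (N : ℝ) ^ 2) :
    ∀ t : ℝ, 0 ≤ t → t < min ((1 - c2 / c1) / M2) T → ∀ k ∈ Finset.Icc 1 N,
      x k t ≤ (c1 / c2) ^ k *
        (C0 / (1 - M2 * t - c2 / c1) ^ 3
          + M3 / (M2 * (1 - M2 * t - c2 / c1) ^ 2)) / (N : ℝ) ^ 2 :=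
  generating_function_finite_time_bound_general N T c1 c2 M2 M3 C0 hc hc2 hM2 hM3 x y x' hx0 hy0
    hderiv hinit hineq
end

section
/- Transport inequality for W^{-1,∞} kernels (L^2 version): Let K = ∇·V with V ∈ L^∞(𝕋^d; ℝ^{d×d}), and let m1, m2 be smooth positive probability densities on 𝕋^d with h = m1/m2. Then |∫ K d(m1 − m2)| ≤ ‖V‖_{L^2(m2)} ( √E(m1|m2) + ‖∇ log m2‖_{L^∞} √D(m1|m2) ), where D(m1|m2) = ∫ (h−1)^2 dm2, E(m1|m2) = ∫ |∇h|^2 dm2, and ‖V‖_{L^2(m2)}^2 = ∫ |V|^2 dm2. -/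
open MeasureTheory

instance euclidCoeFromFun {n : ℕ} : Coe (Fin n → ℝ) (EuclideanSpace ℝ (Fin n)) := ⟨WithLp.toLp 2⟩

open Set in
/-- Cauchy–Schwarz for integrals. -/
lemma my_integral_cauchy_schwarz {α : Type*} [MeasurableSpace α] (μ : Measure α)
    (f g : α → ℝ) (hf2 : Integrable (fun x => f x ^ 2) μ)
    (hg2 : Integrable (fun x => g x ^ 2) μ) (hfg : Integrable (fun x => f x * g x) μ) :
    ∫ x, f x * g x ∂μ ≤ Real.sqrt (∫ x, f x ^ 2 ∂μ) * Real.sqrt (∫ x, g x ^ 2 ∂μ) := by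
  set A := ∫ x, f x ^ 2 ∂μ with hA
  set B := ∫ x, f x * g x ∂μ with hB
  set C := ∫ x, g x ^ 2 ∂μ with hC
  have hA0 : 0 ≤ A := integral_nonneg fun x => sq_nonneg _
  have hC0 : 0 ≤ C := integral_nonneg fun x => sq_nonneg _
  have key : ∀ t : ℝ, 0 ≤ A * (t * t) + (2 * B) * t + C := by
    intro t
    have h1 : Integrable (fun x => (t * f x + g x) ^ 2) μ := by
      have : (fun x => (t * f x + g x) ^ 2)
          = fun x => t ^ 2 * f x ^ 2 + 2 * t * (f x * g x) + g x ^ 2 := by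
        funext x; ring
      rw [this]
      exact ((hf2.const_mul _).add (hfg.const_mul _)).add hg2
    have h2 : 0 ≤ ∫ x, (t * f x + g x) ^ 2 ∂μ := integral_nonneg fun x => sq_nonneg _
    have h3 : ∫ x, (t * f x + g x) ^ 2 ∂μ = A * (t * t) + (2 * B) * t + C := by
      have : (fun x => (t * f x + g x) ^ 2)
          = fun x => t ^ 2 * f x ^ 2 + 2 * t * (f x * g x) + g x ^ 2 := by
        funext x; ring
      rw [this]
      have i1 : Integrable (fun x => t ^ 2 * f x ^ 2) μ := hf2.const_mul _
      have i2 : Integrable (fun x => 2 * t * (f x * g x)) μ := hfg.const_mul _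
      have e1 := integral_add (i1.add i2) hg2
      have e2 := integral_add i1 i2
      simp only [Pi.add_apply] at e1 e2
      rw [e1, e2, MeasureTheory.integral_const_mul, MeasureTheory.integral_const_mul, ← hA, ← hB, ← hC]
      ring
    linarith [h3 ▸ h2]
  have hdisc := discrim_le_zero key
  rw [discrim] at hdisc
  have hBAC : B ^ 2 ≤ A * C := by nlinarith
  calc B ≤ |B| := le_abs_self B
    _ = Real.sqrt (B ^ 2) := (Real.sqrt_sq_eq_abs B).symm
    _ ≤ Real.sqrt (A * C) := Real.sqrt_le_sqrt hBAC
    _ = Real.sqrt A * Real.sqrt C := Real.sqrt_mul hA0 C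

/-- Sum of squares of coordinates of a functional is at most its norm squared. -/
lemma my_sum_sq_apply_le {d : ℕ} (L : EuclideanSpace ℝ (Fin d) →L[ℝ] ℝ) :
    ∑ j, (L (EuclideanSpace.single j 1)) ^ 2 ≤ ‖L‖ ^ 2 := by
  set v : EuclideanSpace ℝ (Fin d) := (InnerProductSpace.toDual ℝ _).symm L with hv
  have hnorm : ‖v‖ = ‖L‖ := (InnerProductSpace.toDual ℝ _).symm.norm_map L
  have happ : ∀ j, L (EuclideanSpace.single j 1) = v j := by
    intro j
    rw [← InnerProductSpace.toDual_symm_apply (y := L), EuclideanSpace.inner_single_right]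
    simp
    rfl
  calc ∑ j, (L (EuclideanSpace.single j 1)) ^ 2 = ∑ j, (v j) ^ 2 := by
        simp only [happ]
    _ = ‖v‖ ^ 2 := by
        rw [EuclideanSpace.norm_eq, Real.sq_sqrt (Finset.sum_nonneg fun j _ => sq_nonneg _)]
        simp [sq_abs]
    _ ≤ ‖L‖ ^ 2 := le_of_eq (by rw [hnorm])

/-- Integral of a divergence of a periodic `C¹` family over the unit cube vanishes (Pi version). -/
lemma my_pi_divergence_zero {n : ℕ} (f : Fin (n+1) → (Fin (n+1) → ℝ) → ℝ)
    (f' : Fin (n+1) → (Fin (n+1) → ℝ) → ((Fin (n+1) → ℝ) →L[ℝ] ℝ))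
    (Hc : ∀ i, Continuous (f i))
    (Hd : ∀ i x, HasFDerivAt (f i) (f' i x) x)
    (Hc' : Continuous (fun x => ∑ i, f' i x (Pi.single i 1)))
    (hper : ∀ i x, f i (x + Pi.single i 1) = f i x) :
    ∫ x in Set.Icc (0 : Fin (n+1) → ℝ) 1, ∑ i, f' i x (Pi.single i 1) = 0 := by
  have key := MeasureTheory.integral_divergence_of_hasFDerivAt_off_countable'
    (0 : Fin (n+1) → ℝ) 1 (fun i => zero_le_one) f f' ∅ Set.countable_empty
    (fun i => (Hc i).continuousOn)
    (fun x _ i => Hd i x)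
    (Hc'.continuousOn.integrableOn_compact isCompact_Icc)
  rw [key]
  refine Finset.sum_eq_zero fun i _ => ?_
  have hins : ∀ x : Fin n → ℝ,
      i.insertNth ((1 : Fin (n+1) → ℝ) i) x = i.insertNth ((0 : Fin (n+1) → ℝ) i) x
        + (Pi.single i 1 : Fin (n+1) → ℝ) := by
    intro x
    refine funext fun j => Fin.succAboveCases i ?_ ?_ j <;>
      simp [Pi.single_eq_of_ne', Fin.succAbove_ne i]
  have : ∀ x : Fin n → ℝ, f i (i.insertNth ((1 : Fin (n+1) → ℝ) i) x)
      = f i (i.insertNth ((0 : Fin (n+1) → ℝ) i) x) := by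
    intro x; rw [hins x, hper i]
  simp only [this, sub_self]

/-- Integral of a divergence of a periodic smooth family over the unit cube vanishes. -/
lemma my_euclidean_divergence_zero {n : ℕ}
    (F : Fin (n+1) → EuclideanSpace ℝ (Fin (n+1)) → ℝ)
    (hF : ∀ i, ContDiff ℝ (⊤ : ℕ∞) (F i))
    (hper : ∀ i x, F i (x + EuclideanSpace.single i 1) = F i x) :
    ∫ x in Set.univ.pi (fun _ : Fin (n+1) => Set.Icc (0:ℝ) 1),
      ∑ i, fderiv ℝ (F i) x (EuclideanSpace.single i 1) = 0 := by
  set L : (Fin (n+1) → ℝ) ≃L[ℝ] EuclideanSpace ℝ (Fin (n+1)) :=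
    (PiLp.continuousLinearEquiv 2 ℝ (fun _ : Fin (n+1) => ℝ)).symm with hL
  have hLsingle : ∀ i : Fin (n+1), L (Pi.single i 1) = EuclideanSpace.single i 1 := fun i => rfl
  rw [show (Set.univ.pi fun _ : Fin (n+1) => Set.Icc (0:ℝ) 1)
      = Set.Icc (0 : Fin (n+1) → ℝ) 1 from Set.pi_univ_Icc 0 1]
  have main := my_pi_divergence_zero (fun i y => F i (L y))
    (fun i y => (fderiv ℝ (F i) (L y)).comp L.toContinuousLinearMap)
    (fun i => ((hF i).continuous).comp L.continuous)
    (fun i y => (((hF i).differentiable (by simp)).differentiableAt.hasFDerivAt).comp y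
      (L.hasFDerivAt))
    (by
      apply continuous_finset_sum
      intro i _
      have : (fun y => ((fderiv ℝ (F i) (L y)).comp L.toContinuousLinearMap) (Pi.single i 1))
          = fun y => fderiv ℝ (F i) (L y) (EuclideanSpace.single i 1) := by
        funext y
        rw [ContinuousLinearMap.comp_apply]
        congr 1
      rw [this]
      exact ((ContinuousLinearMap.apply ℝ ℝ (EuclideanSpace.single i 1)).continuous.comp
        (((hF i).continuous_fderiv (by simp)).comp L.continuous)))
    (by
      intro i y
      have h1 : L (y + Pi.single i 1) = L y + EuclideanSpace.single i 1 := by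
        rw [map_add, hLsingle]
      show F i (L (y + Pi.single i 1)) = F i (L y)
      rw [h1]
      exact hper i (L y))
  rw [← main]
  apply MeasureTheory.setIntegral_congr_fun measurableSet_Icc
  intro x _
  simp only [ContinuousLinearMap.comp_apply]
  congr 1

open MeasureTheory


/-- Transport inequality for `W^{-1,∞}` kernels, `L²` version, on the torus
(realized as `ℤ^d`-periodic functions on `ℝ^d`, integrals over the unit cube):
with `h = m1/m2`,
`‖∫ K d(m1-m2)‖ ≤ ‖V‖_{L²(m2)} (√E(m1|m2) + ‖∇log m2‖_∞ √D(m1|m2))`. -/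
theorem transport_inequality_l2
    (d : ℕ) (hd : 0 < d)
    (m1 m2 : EuclideanSpace ℝ (Fin d) → ℝ)
    (V : EuclideanSpace ℝ (Fin d) → Matrix (Fin d) (Fin d) ℝ)
    (K : EuclideanSpace ℝ (Fin d) → EuclideanSpace ℝ (Fin d))
    (Lm : ℝ)
    (hm1 : ContDiff ℝ (⊤ : ℕ∞) m1) (hm2 : ContDiff ℝ (⊤ : ℕ∞) m2)
    (hV : ∀ i j : Fin d, ContDiff ℝ (⊤ : ℕ∞) (fun x => V x i j))
    (hVbdd : ∃ B : ℝ, ∀ x, ∀ i j : Fin d, |V x i j| ≤ B)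
    (hm1pos : ∀ x, 0 < m1 x) (hm2pos : ∀ x, 0 < m2 x)
    (hm1per : ∀ x, ∀ i : Fin d, m1 (x + EuclideanSpace.single i 1) = m1 x)
    (hm2per : ∀ x, ∀ i : Fin d, m2 (x + EuclideanSpace.single i 1) = m2 x)
    (hVper : ∀ x, ∀ i : Fin d, V (x + EuclideanSpace.single i 1) = V x)
    (hm1prob : ∫ x in Set.univ.pi (fun _ : Fin d => Set.Icc (0:ℝ) 1), m1 (WithLp.toLp 2 x) = 1)
    (hm2prob : ∫ x in Set.univ.pi (fun _ : Fin d => Set.Icc (0:ℝ) 1), m2 (WithLp.toLp 2 x) = 1)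
    (hK : ∀ x, ∀ i : Fin d, K x i =
      ∑ j : Fin d, fderiv ℝ (fun y => V y j i) x (EuclideanSpace.single j 1))
    (hLm : ∀ x, ‖fderiv ℝ (fun y => Real.log (m2 y)) x‖ ≤ Lm) :
    ‖∫ x in Set.univ.pi (fun _ : Fin d => Set.Icc (0:ℝ) 1), (m1 (WithLp.toLp 2 x) - m2 (WithLp.toLp 2 x)) • K (WithLp.toLp 2 x)‖ ≤
      Real.sqrt (∫ x in Set.univ.pi (fun _ : Fin d => Set.Icc (0:ℝ) 1),
          (∑ i : Fin d, ∑ j : Fin d, (V (WithLp.toLp 2 x) i j) ^ 2) * m2 (WithLp.toLp 2 x)) *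
        (Real.sqrt (∫ x in Set.univ.pi (fun _ : Fin d => Set.Icc (0:ℝ) 1),
              ‖fderiv ℝ (fun y => m1 y / m2 y) (WithLp.toLp 2 x)‖ ^ 2 * m2 (WithLp.toLp 2 x))
          + Lm * Real.sqrt (∫ x in Set.univ.pi (fun _ : Fin d => Set.Icc (0:ℝ) 1),
              (m1 (WithLp.toLp 2 x) / m2 (WithLp.toLp 2 x) - 1) ^ 2 * m2 (WithLp.toLp 2 x))) := by
  obtain ⟨n, rfl⟩ : ∃ n, d = n + 1 := ⟨d - 1, (Nat.succ_pred_eq_of_pos hd).symm⟩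
  set Q : Set (Fin (n+1) → ℝ) := Set.univ.pi (fun _ : Fin (n+1) => Set.Icc (0:ℝ) 1) with hQdef
  have hQc : IsCompact Q := isCompact_univ_pi fun _ => isCompact_Icc
  have hQm : MeasurableSet Q := MeasurableSet.univ_pi fun _ => measurableSet_Icc
  set L : (Fin (n+1) → ℝ) ≃L[ℝ] EuclideanSpace ℝ (Fin (n+1)) :=
    (PiLp.continuousLinearEquiv 2 ℝ (fun _ : Fin (n+1) => ℝ)).symm with hLdef
  -- integrability from continuity
  have intg : ∀ f : EuclideanSpace ℝ (Fin (n+1)) → ℝ, Continuous f →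
      IntegrableOn (fun x : Fin (n+1) → ℝ => f x) Q volume := by
    intro f hf
    have : Continuous (fun y : Fin (n+1) → ℝ => f y) := hf.comp L.continuous
    exact this.continuousOn.integrableOn_compact hQc
  -- basic smoothness
  have hm2ne : ∀ x, m2 x ≠ 0 := fun x => (hm2pos x).ne'
  set h : EuclideanSpace ℝ (Fin (n+1)) → ℝ := fun x => m1 x / m2 x with hhdef
  have hh : ContDiff ℝ (⊤ : ℕ∞) h := hm1.div hm2 hm2ne
  have hlog : ContDiff ℝ (⊤ : ℕ∞) (fun y => Real.log (m2 y)) :=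
    contDiff_iff_contDiffAt.2 fun x =>
      (Real.contDiffAt_log.2 (hm2ne x)).comp x hm2.contDiffAt
  set w : EuclideanSpace ℝ (Fin (n+1)) → Fin (n+1) → ℝ :=
    fun x j => fderiv ℝ h x (EuclideanSpace.single j 1)
      + (h x - 1) * fderiv ℝ (fun y => Real.log (m2 y)) x (EuclideanSpace.single j 1) with hwdef
  -- pointwise derivative identity
  have hw : ∀ (x : EuclideanSpace ℝ (Fin (n+1))) (j : Fin (n+1)),
      fderiv ℝ (fun y => m1 y - m2 y) x (EuclideanSpace.single j 1) = w x j * m2 x := by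
    intro x j
    have dh : DifferentiableAt ℝ h x := (hh.differentiable (by simp)).differentiableAt
    have dm1 : DifferentiableAt ℝ m1 x := (hm1.differentiable (by simp)).differentiableAt
    have dm2 : DifferentiableAt ℝ m2 x := (hm2.differentiable (by simp)).differentiableAt
    have hlogd : HasFDerivAt (fun y => Real.log (m2 y)) ((m2 x)⁻¹ • fderiv ℝ m2 x) x :=
      (Real.hasDerivAt_log (hm2ne x)).comp_hasFDerivAt x dm2.hasFDerivAt
    have hlogf : fderiv ℝ (fun y => Real.log (m2 y)) x = (m2 x)⁻¹ • fderiv ℝ m2 x :=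
      hlogd.fderiv
    have hm1eq : m1 = fun y => h y * m2 y :=
      funext fun y => (div_mul_cancel₀ (m1 y) (hm2ne y)).symm
    have hfd1 : fderiv ℝ m1 x = h x • fderiv ℝ m2 x + m2 x • fderiv ℝ h x := by
      conv_lhs => rw [hm1eq]
      exact fderiv_mul dh dm2
    have hsub : fderiv ℝ (fun y => m1 y - m2 y) x = fderiv ℝ m1 x - fderiv ℝ m2 x :=
      fderiv_sub dm1 dm2
    rw [hsub, hwdef]
    simp only [hfd1, hlogf, ContinuousLinearMap.sub_apply, ContinuousLinearMap.add_apply,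
      ContinuousLinearMap.smul_apply, smul_eq_mul]
    field_simp
    have hc : m2 x * (m2 x)⁻¹ = 1 := mul_inv_cancel₀ (hm2ne x)
    linear_combination ((fderiv ℝ m2 x) (EuclideanSpace.single j 1)
      - m1 x * (m2 x)⁻¹ * (fderiv ℝ m2 x) (EuclideanSpace.single j 1)) * hc
  -- continuity facts
  have hwcont : ∀ j, Continuous (fun x => w x j) := by
    intro j
    exact ((ContinuousLinearMap.apply ℝ ℝ (EuclideanSpace.single j 1)).continuous.comp
      (hh.continuous_fderiv (by simp))).add
      ((hh.continuous.sub continuous_const).mul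
        ((ContinuousLinearMap.apply ℝ ℝ (EuclideanSpace.single j 1)).continuous.comp
          (hlog.continuous_fderiv (by simp))))
  have hKicont : ∀ i, Continuous (fun x => K x i) := by
    intro i
    have he : (fun x => K x i)
        = fun x => ∑ j, fderiv ℝ (fun y => V y j i) x (EuclideanSpace.single j 1) :=
      funext fun x => hK x i
    rw [he]
    exact continuous_finset_sum _ fun j _ =>
      (ContinuousLinearMap.apply ℝ ℝ (EuclideanSpace.single j 1)).continuous.comp
        ((hV j i).continuous_fderiv (by simp))
  -- key integration-by-parts identity
  have key : ∀ i, ∫ x in Q, (m1 x - m2 x) * K x i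
      = - ∫ x in Q, (∑ j, V x j i * w x j) * m2 x := by
    intro i
    have hz := my_euclidean_divergence_zero (fun j x => V x j i * (m1 x - m2 x))
      (fun j => (hV j i).mul (hm1.sub hm2))
      (fun j x => by simp [hVper, hm1per, hm2per])
    have hpt : ∀ x : EuclideanSpace ℝ (Fin (n+1)),
        (∑ j, fderiv ℝ (fun y => V y j i * (m1 y - m2 y)) x (EuclideanSpace.single j 1))
        = (m1 x - m2 x) * K x i + (∑ j, V x j i * w x j) * m2 x := by
      intro x
      have hterm : ∀ j : Fin (n+1),
          fderiv ℝ (fun y => V y j i * (m1 y - m2 y)) x (EuclideanSpace.single j 1)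
          = V x j i * (w x j * m2 x)
            + (m1 x - m2 x) * fderiv ℝ (fun y => V y j i) x (EuclideanSpace.single j 1) := by
        intro j
        have dV : DifferentiableAt ℝ (fun y => V y j i) x :=
          ((hV j i).differentiable (by simp)).differentiableAt
        have dS : DifferentiableAt ℝ (fun y => m1 y - m2 y) x :=
          ((hm1.sub hm2).differentiable (by simp)).differentiableAt
        rw [fderiv_fun_mul dV dS]
        simp only [ContinuousLinearMap.add_apply, ContinuousLinearMap.smul_apply, smul_eq_mul]
        rw [hw x j]
      have e1 : ∑ j, V x j i * (w x j * m2 x) = (∑ j, V x j i * w x j) * m2 x := by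
        rw [Finset.sum_mul]; exact Finset.sum_congr rfl fun j _ => by ring
      rw [Finset.sum_congr rfl fun j _ => hterm j, Finset.sum_add_distrib, e1, ← Finset.mul_sum,
        ← hK x i]
      ring
    have hint1 : IntegrableOn (fun x : Fin (n+1) → ℝ => (m1 x - m2 x) * K x i) Q volume :=
      intg _ ((hm1.continuous.sub hm2.continuous).mul (hKicont i))
    have hint2 : IntegrableOn (fun x : Fin (n+1) → ℝ => (∑ j, V x j i * w x j) * m2 x) Q volume :=
      intg _ ((continuous_finset_sum _ fun j _ => ((hV j i).continuous.mul (hwcont j))).mul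
        hm2.continuous)
    have hz2 : ∫ x in Q, ((m1 x - m2 x) * K x i + (∑ j, V x j i * w x j) * m2 x) = 0 := by
      rw [← hz]
      exact MeasureTheory.setIntegral_congr_fun hQm (fun x _ => (hpt x).symm)
    rw [MeasureTheory.integral_add hint1 hint2] at hz2
    linarith
  -- the vector-valued integral identity
  set G : EuclideanSpace ℝ (Fin (n+1)) → EuclideanSpace ℝ (Fin (n+1)) :=
    fun x => (WithLp.equiv 2 (Fin (n+1) → ℝ)).symm
      (fun i => (∑ j, V x j i * w x j) * m2 x) with hGdef
  have hGcont : Continuous G := by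
    have hc : Continuous (fun x : EuclideanSpace ℝ (Fin (n+1)) =>
        (fun i => (∑ j, V x j i * w x j) * m2 x : Fin (n+1) → ℝ)) :=
      continuous_pi fun i => (continuous_finset_sum _ fun j _ =>
        ((hV j i).continuous.mul (hwcont j))).mul hm2.continuous
    exact L.continuous.comp hc
  have hKcont : Continuous K := by
    have hKeq : K = fun x => (WithLp.equiv 2 (Fin (n+1) → ℝ)).symm
        (fun i => ∑ j, fderiv ℝ (fun y => V y j i) x (EuclideanSpace.single j 1)) :=
      funext fun x => (WithLp.ext_iff 2).2 (funext fun i => hK x i)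
    rw [hKeq]
    have hc2 : Continuous (fun x : EuclideanSpace ℝ (Fin (n+1)) =>
        (fun i => ∑ j, fderiv ℝ (fun y => V y j i) x (EuclideanSpace.single j 1)
          : Fin (n+1) → ℝ)) :=
      continuous_pi fun i => continuous_finset_sum _ fun j _ =>
        ((hV j i).continuous_fderiv (by simp)).clm_apply continuous_const
    exact L.continuous.comp hc2
  have intgE : ∀ f : EuclideanSpace ℝ (Fin (n+1)) → EuclideanSpace ℝ (Fin (n+1)), Continuous f →
      IntegrableOn (fun x : Fin (n+1) → ℝ => f x) Q volume := by
    intro f hf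
    have : Continuous (fun y : Fin (n+1) → ℝ => f y) := hf.comp L.continuous
    exact this.continuousOn.integrableOn_compact hQc
  have hi1 : IntegrableOn (fun x : Fin (n+1) → ℝ => (m1 x - m2 x) • K x) Q volume :=
    intgE _ ((hm1.continuous.sub hm2.continuous).smul hKcont)
  have hi2 : IntegrableOn (fun x : Fin (n+1) → ℝ => G x) Q volume := intgE _ hGcont
  have hveq : ∫ x in Q, (m1 x - m2 x) • K x = - ∫ x in Q, G x := by
    refine (WithLp.ext_iff 2).2 (funext fun i => ?_)
    have c1 : (∫ x in Q, (m1 x - m2 x) • K x) i = ∫ x in Q, ((m1 x - m2 x) • K x) i :=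
      ((EuclideanSpace.proj i).integral_comp_comm hi1).symm
    have c2 : (∫ x in Q, G x) i = ∫ x in Q, (G x) i :=
      ((EuclideanSpace.proj i).integral_comp_comm hi2).symm
    have e2 : ∫ x in Q, (G x) i = ∫ x in Q, (∑ j, V x j i * w x j) * m2 x := rfl
    have e1 : ∫ x in Q, ((m1 x - m2 x) • K x) i = ∫ x in Q, (m1 x - m2 x) * K x i := rfl
    show (∫ x in Q, (m1 x - m2 x) • K x) i = -((∫ x in Q, G x) i)
    rw [c1, c2, e1, e2, key i]
  rw [hveq, norm_neg]
  -- pointwise norm bound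
  have hLm0 : 0 ≤ Lm := le_trans (norm_nonneg _) (hLm 0)
  set VF : EuclideanSpace ℝ (Fin (n+1)) → ℝ :=
    fun x => Real.sqrt (∑ i, ∑ j, V x i j ^ 2) with hVFdef
  have hVFnn : ∀ x, 0 ≤ VF x := fun x => Real.sqrt_nonneg _
  have hVFcont : Continuous VF :=
    Real.continuous_sqrt.comp (continuous_finset_sum _ fun i _ =>
      continuous_finset_sum _ fun j _ => ((hV i j).continuous.pow 2))
  have hAhcont : Continuous (fun x => ‖fderiv ℝ h x‖) := (hh.continuous_fderiv (by simp)).norm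
  have hGnorm : ∀ x : EuclideanSpace ℝ (Fin (n+1)),
      ‖G x‖ ≤ VF x * (‖fderiv ℝ h x‖ + Lm * |h x - 1|) * m2 x := by
    intro x
    have hb1 : ‖G x‖ = Real.sqrt ((∑ i, (∑ j, V x j i * w x j) ^ 2) * m2 x ^ 2) := by
      rw [EuclideanSpace.norm_eq]
      congr 1
      rw [Finset.sum_mul]
      refine Finset.sum_congr rfl fun i _ => ?_
      rw [Real.norm_eq_abs, sq_abs]
      show ((∑ j, V x j i * w x j) * m2 x) ^ 2 = _
      ring
    have hcs : (∑ i, (∑ j, V x j i * w x j) ^ 2)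
        ≤ (∑ i, ∑ j, V x i j ^ 2) * (∑ j, w x j ^ 2) := by
      have : (∑ i, (∑ j, V x j i * w x j) ^ 2)
          ≤ ∑ i : Fin (n+1), (∑ j, V x j i ^ 2) * (∑ j, w x j ^ 2) :=
        Finset.sum_le_sum fun i _ => Finset.sum_mul_sq_le_sq_mul_sq _ _ _
      refine le_trans this (le_of_eq ?_)
      rw [← Finset.sum_mul, Finset.sum_comm]
    have hwb : Real.sqrt (∑ j, w x j ^ 2) ≤ ‖fderiv ℝ h x‖ + Lm * |h x - 1| := by
      set ua : EuclideanSpace ℝ (Fin (n+1)) := (WithLp.equiv 2 (Fin (n+1) → ℝ)).symm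
        (fun j => fderiv ℝ h x (EuclideanSpace.single j 1)) with huadef
      set ub : EuclideanSpace ℝ (Fin (n+1)) := (WithLp.equiv 2 (Fin (n+1) → ℝ)).symm
        (fun j => (h x - 1) * fderiv ℝ (fun y => Real.log (m2 y)) x (EuclideanSpace.single j 1))
        with hubdef
      have hws : Real.sqrt (∑ j, w x j ^ 2) = ‖ua + ub‖ := by
        rw [EuclideanSpace.norm_eq]
        congr 1
        refine Finset.sum_congr rfl fun j _ => ?_
        rw [Real.norm_eq_abs, sq_abs]
        rfl
      have hua : ‖ua‖ ≤ ‖fderiv ℝ h x‖ := by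
        rw [EuclideanSpace.norm_eq]
        have : ∑ j, ‖ua j‖ ^ 2 = ∑ j, (fderiv ℝ h x (EuclideanSpace.single j 1)) ^ 2 :=
          Finset.sum_congr rfl fun j _ => by rw [Real.norm_eq_abs, sq_abs]; rfl
        rw [this]
        calc Real.sqrt (∑ j, (fderiv ℝ h x (EuclideanSpace.single j 1)) ^ 2)
            ≤ Real.sqrt (‖fderiv ℝ h x‖ ^ 2) := Real.sqrt_le_sqrt (my_sum_sq_apply_le _)
          _ = ‖fderiv ℝ h x‖ := Real.sqrt_sq (norm_nonneg _)
      have hub : ‖ub‖ ≤ Lm * |h x - 1| := by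
        rw [EuclideanSpace.norm_eq]
        have e3 : ∑ j, ‖ub j‖ ^ 2 = (h x - 1) ^ 2
            * ∑ j, (fderiv ℝ (fun y => Real.log (m2 y)) x (EuclideanSpace.single j 1)) ^ 2 := by
          rw [Finset.mul_sum]
          refine Finset.sum_congr rfl fun j _ => ?_
          rw [Real.norm_eq_abs, sq_abs]
          show ((h x - 1) * fderiv ℝ (fun y => Real.log (m2 y)) x (EuclideanSpace.single j 1)) ^ 2 = _
          ring
        rw [e3, Real.sqrt_mul (sq_nonneg _), Real.sqrt_sq_eq_abs]
        calc |h x - 1| * Real.sqrt (∑ j, (fderiv ℝ (fun y => Real.log (m2 y)) x (EuclideanSpace.single j 1)) ^ 2)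
            ≤ |h x - 1| * ‖fderiv ℝ (fun y => Real.log (m2 y)) x‖ := by
              refine mul_le_mul_of_nonneg_left ?_ (abs_nonneg _)
              calc Real.sqrt (∑ j, (fderiv ℝ (fun y => Real.log (m2 y)) x (EuclideanSpace.single j 1)) ^ 2)
                  ≤ Real.sqrt (‖fderiv ℝ (fun y => Real.log (m2 y)) x‖ ^ 2) :=
                    Real.sqrt_le_sqrt (my_sum_sq_apply_le _)
                _ = _ := Real.sqrt_sq (norm_nonneg _)
          _ ≤ |h x - 1| * Lm := mul_le_mul_of_nonneg_left (hLm x) (abs_nonneg _)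
          _ = Lm * |h x - 1| := mul_comm _ _
      calc Real.sqrt (∑ j, w x j ^ 2) = ‖ua + ub‖ := hws
        _ ≤ ‖ua‖ + ‖ub‖ := norm_add_le _ _
        _ ≤ ‖fderiv ℝ h x‖ + Lm * |h x - 1| := add_le_add hua hub
    calc ‖G x‖ = Real.sqrt ((∑ i, (∑ j, V x j i * w x j) ^ 2) * m2 x ^ 2) := hb1
      _ = Real.sqrt (∑ i, (∑ j, V x j i * w x j) ^ 2) * m2 x := by
          rw [Real.sqrt_mul (Finset.sum_nonneg fun i _ => sq_nonneg _), Real.sqrt_sq (hm2pos x).le]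
      _ ≤ (VF x * Real.sqrt (∑ j, w x j ^ 2)) * m2 x := by
          refine mul_le_mul_of_nonneg_right ?_ (hm2pos x).le
          rw [hVFdef]
          beta_reduce
          rw [← Real.sqrt_mul (x := ∑ i, ∑ j, V x i j ^ 2) (Finset.sum_nonneg fun i _ =>
            Finset.sum_nonneg fun j _ => sq_nonneg _)]
          exact Real.sqrt_le_sqrt hcs
      _ ≤ VF x * (‖fderiv ℝ h x‖ + Lm * |h x - 1|) * m2 x := by
          refine mul_le_mul_of_nonneg_right (mul_le_mul_of_nonneg_left hwb (hVFnn x)) (hm2pos x).le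
  -- continuity for the bounding functions
  have hsqrtm2 : Continuous (fun x => Real.sqrt (m2 x)) := Real.continuous_sqrt.comp hm2.continuous
  have habs_cont : Continuous (fun x => |h x - 1|) := (hh.continuous.sub continuous_const).abs
  have bound_cont : Continuous (fun x : EuclideanSpace ℝ (Fin (n+1)) =>
      VF x * (‖fderiv ℝ h x‖ + Lm * |h x - 1|) * m2 x) :=
    ((hVFcont.mul (hAhcont.add (continuous_const.mul habs_cont)))).mul hm2.continuous
  -- Cauchy-Schwarz helper
  have cs : ∀ g : EuclideanSpace ℝ (Fin (n+1)) → ℝ, Continuous g →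
      ∫ x in Q, VF x * g x * m2 x ≤
        Real.sqrt (∫ x in Q, (∑ i, ∑ j, V x i j ^ 2) * m2 x)
          * Real.sqrt (∫ x in Q, g x ^ 2 * m2 x) := by
    intro g hgc
    have i1 : Integrable (fun x : Fin (n+1) → ℝ => (VF x * Real.sqrt (m2 x)) ^ 2)
        (volume.restrict Q) := intg _ ((hVFcont.mul hsqrtm2).pow 2)
    have i2 : Integrable (fun x : Fin (n+1) → ℝ => (g x * Real.sqrt (m2 x)) ^ 2)
        (volume.restrict Q) := intg _ ((hgc.mul hsqrtm2).pow 2)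
    have i3 : Integrable (fun x : Fin (n+1) → ℝ =>
        (VF x * Real.sqrt (m2 x)) * (g x * Real.sqrt (m2 x))) (volume.restrict Q) :=
      intg _ ((hVFcont.mul hsqrtm2).mul (hgc.mul hsqrtm2))
    have h1 := my_integral_cauchy_schwarz (volume.restrict Q)
      (fun x : Fin (n+1) → ℝ => VF x * Real.sqrt (m2 x))
      (fun x : Fin (n+1) → ℝ => g x * Real.sqrt (m2 x)) i1 i2 i3
    have r1 : ∫ x in Q, (VF x * Real.sqrt (m2 x)) * (g x * Real.sqrt (m2 x))
        = ∫ x in Q, VF x * g x * m2 x := by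
      refine MeasureTheory.setIntegral_congr_fun hQm fun x _ => ?_
      have hs : Real.sqrt (m2 x) * Real.sqrt (m2 x) = m2 x := Real.mul_self_sqrt (hm2pos x).le
      linear_combination (VF x * g x) * hs
    have r2 : ∫ x in Q, (VF x * Real.sqrt (m2 x)) ^ 2
        = ∫ x in Q, (∑ i, ∑ j, V x i j ^ 2) * m2 x := by
      refine MeasureTheory.setIntegral_congr_fun hQm fun x _ => ?_
      have h2 : Real.sqrt (m2 x) ^ 2 = m2 x := Real.sq_sqrt (hm2pos x).le
      have h3 : VF x ^ 2 = ∑ i, ∑ j, V x i j ^ 2 :=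
        Real.sq_sqrt (Finset.sum_nonneg fun i _ => Finset.sum_nonneg fun j _ => sq_nonneg _)
      calc (VF x * Real.sqrt (m2 x)) ^ 2 = VF x ^ 2 * Real.sqrt (m2 x) ^ 2 := by ring
        _ = (∑ i, ∑ j, V x i j ^ 2) * m2 x := by rw [h2, h3]
    have r3 : ∫ x in Q, (g x * Real.sqrt (m2 x)) ^ 2 = ∫ x in Q, g x ^ 2 * m2 x := by
      refine MeasureTheory.setIntegral_congr_fun hQm fun x _ => ?_
      have h2 : Real.sqrt (m2 x) ^ 2 = m2 x := Real.sq_sqrt (hm2pos x).le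
      calc (g x * Real.sqrt (m2 x)) ^ 2 = g x ^ 2 * Real.sqrt (m2 x) ^ 2 := by ring
        _ = g x ^ 2 * m2 x := by rw [h2]
    rw [r1, r2, r3] at h1
    exact h1
  have cs1 := cs (fun x => ‖fderiv ℝ h x‖) hAhcont
  have cs2 := cs (fun x => |h x - 1|) habs_cont
  have r4 : ∫ x in Q, |h x - 1| ^ 2 * m2 x = ∫ x in Q, (h x - 1) ^ 2 * m2 x :=
    MeasureTheory.setIntegral_congr_fun hQm fun x _ => by rw [sq_abs]
  rw [r4] at cs2
  have split : ∫ x in Q, VF x * (‖fderiv ℝ h x‖ + Lm * |h x - 1|) * m2 x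
      = (∫ x in Q, VF x * ‖fderiv ℝ h x‖ * m2 x)
        + Lm * ∫ x in Q, VF x * |h x - 1| * m2 x := by
    have ee : ∀ x : EuclideanSpace ℝ (Fin (n+1)),
        VF x * (‖fderiv ℝ h x‖ + Lm * |h x - 1|) * m2 x
        = VF x * ‖fderiv ℝ h x‖ * m2 x + Lm * (VF x * |h x - 1| * m2 x) := fun x => by ring
    rw [MeasureTheory.setIntegral_congr_fun hQm fun x _ => ee x]
    rw [MeasureTheory.integral_add (intg (fun x => VF x * ‖fderiv ℝ h x‖ * m2 x) ((hVFcont.mul hAhcont).mul hm2.continuous))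
      ((intg (fun x => VF x * |h x - 1| * m2 x) ((hVFcont.mul habs_cont).mul hm2.continuous)).const_mul Lm),
      MeasureTheory.integral_const_mul]
  calc ‖∫ x in Q, G x‖ ≤ ∫ x in Q, ‖G x‖ := norm_integral_le_integral_norm _
    _ ≤ ∫ x in Q, VF x * (‖fderiv ℝ h x‖ + Lm * |h x - 1|) * m2 x :=
        MeasureTheory.integral_mono (intg _ hGcont.norm) (intg _ bound_cont) (fun x => hGnorm x)
    _ = (∫ x in Q, VF x * ‖fderiv ℝ h x‖ * m2 x)
        + Lm * ∫ x in Q, VF x * |h x - 1| * m2 x := split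
    _ ≤ Real.sqrt (∫ x in Q, (∑ i, ∑ j, V x i j ^ 2) * m2 x)
          * Real.sqrt (∫ x in Q, ‖fderiv ℝ h x‖ ^ 2 * m2 x)
        + Lm * (Real.sqrt (∫ x in Q, (∑ i, ∑ j, V x i j ^ 2) * m2 x)
          * Real.sqrt (∫ x in Q, (h x - 1) ^ 2 * m2 x)) :=
        add_le_add cs1 (mul_le_mul_of_nonneg_left cs2 hLm0)
    _ = Real.sqrt (∫ x in Q, (∑ i, ∑ j, V x i j ^ 2) * m2 x)
        * (Real.sqrt (∫ x in Q, ‖fderiv ℝ h x‖ ^ 2 * m2 x)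
          + Lm * Real.sqrt (∫ x in Q, (h x - 1) ^ 2 * m2 x)) := by ring
end

section
/- Comparison supersolution for the discrete transport hierarchy: Let N ≥ 2, c ≥ 0, and let z^k : [0,∞) → ℝ_{≥0}, k ∈ [N], be C^1 functions satisfying, for all t ≥ 0 and k ≤ N/2, d z^k/dt ≤ c z^k + c k (z^{k+1} − z^k) + c k^β/N^2 + c/N^2, with z^k(0) ≤ C0' k^2/N^2 for k ≤ N/2 and z^k(t) ≤ C1 e^{c t} N^{β−2} for k > N/2, where β ≥ 2 is an integer and C0', C1 ≥ 0. Then there exists M > 0 depending only on β, c, C0', C1 such that z^k(t) ≤ M e^{Mt} k^β/N^2 for all t ≥ 0 and k ∈ [N]. -/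
/-!
The barrier `w^k(t) = M e^{Mt} k^β / N²` dominates `z^k` at `t = 0` (as `k² ≤ k^β`) and for
`k > N/2` (as `N^β ≤ 2^β k^β`). For `k ≤ N/2` it is a strict supersolution of the transport
inequality once `M` is large, because `k ((k+1)^β - k^β) ≤ β 2^{β-1} k^β` keeps the coupling
term proportional to `w^k`. Hence `max_k (z^k - w^k)` can never become positive: at a first
contact some `z^k - w^k` vanishes while all others are `≤ 0`, and its derivative is negative.
-/

open Set Filter Topology Real

lemma add_one_pow_sub_pow_le {α : Type*} [CommRing α] [LinearOrder α] [IsStrictOrderedRing α]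
    {x : α} (hx : 1 ≤ x) (n : ℕ) : (x + 1) ^ n - x ^ n ≤ 2 ^ (n - 1) * n * x ^ (n - 1) := by
  have hx0 : 0 ≤ x := zero_le_one.trans hx
  calc (x + 1) ^ n - x ^ n ≤ |(x + 1) ^ n - x ^ n| := le_abs_self _
    _ ≤ |x + 1 - x| * n * max |x + 1| |x| ^ (n - 1) := abs_pow_sub_pow_le ..
    _ = n * (x + 1) ^ (n - 1) := by
      rw [add_sub_cancel_left, abs_one, one_mul, abs_of_nonneg hx0,
        abs_of_nonneg (by positivity), max_eq_left (by linarith)]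
    _ ≤ n * (2 * x) ^ (n - 1) := by gcongr; linarith
    _ = 2 ^ (n - 1) * n * x ^ (n - 1) := by rw [mul_pow]; ring

theorem eventually_slope_finset_sup'_lt {ι : Type*} {I : Finset ι} (hI : I.Nonempty)
    {u : ι → ℝ → ℝ} {d : ι → ℝ} {x r : ℝ} (hu : ∀ i ∈ I, HasDerivAt (u i) (d i) x)
    (hr : ∀ i ∈ I, u i x = I.sup' hI (u · x) → d i < r) :
    ∀ᶠ y in 𝓝[>] x, slope (fun s => I.sup' hI (u · s)) x y < r := by
  set f := fun s => I.sup' hI (u · s)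
  have key : ∀ i ∈ I, ∀ᶠ y in 𝓝[>] x, u i y - r * (y - x) < f x := by
    intro i hi
    rcases (I.le_sup' (u · x) hi).eq_or_lt with hactive | hinactive
    · have hslope : ∀ᶠ y in 𝓝[>] x, slope (u i) x y < r :=
        ((hasDerivAt_iff_tendsto_slope.1 (hu i hi)).eventually_lt_const
          (hr i hi hactive)).filter_mono (nhdsWithin_mono _ fun y hy => ne_of_gt hy)
      filter_upwards [hslope, self_mem_nhdsWithin] with y hy hxy
      rw [slope_def_field, div_lt_iff₀ (sub_pos.2 hxy)] at hy
      simp only [f] at hactive ⊢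
      linarith
    · have hcont : ContinuousAt (fun y => u i y - r * (y - x)) x := by
        have := (hu i hi).continuousAt
        fun_prop
      refine (hcont.eventually_lt continuousAt_const ?_).filter_mono nhdsWithin_le_nhds
      simpa using hinactive
  filter_upwards [I.eventually_all.2 key, self_mem_nhdsWithin] with y hy hxy
  have hfy : f y < f x + r * (y - x) :=
    (Finset.sup'_lt_iff hI).2 fun i hi => by linarith [hy i hi]
  rw [slope_def_field, div_lt_iff₀ (sub_pos.2 hxy)]
  linarith

/-- The right Dini derivative of `max_i u_i` is at most the largest derivative among the active
`u_i`, so the fencing theorem applies to `max_i u_i` with the barrier `0`. -/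
theorem nonpos_of_deriv_neg_at_contact {ι : Type*} {I : Finset ι} {u d : ι → ℝ → ℝ}
    {a b : ℝ} (hu : ∀ i ∈ I, ∀ x ∈ Icc a b, HasDerivAt (u i) (d i x) x)
    (ha : ∀ i ∈ I, u i a ≤ 0)
    (hcontact : ∀ x ∈ Ico a b, (∀ j ∈ I, u j x ≤ 0) → ∀ i ∈ I, u i x = 0 → d i x < 0) :
    ∀ x ∈ Icc a b, ∀ i ∈ I, u i x ≤ 0 := by
  rcases I.eq_empty_or_nonempty with rfl | hI
  · simp
  set f := fun s => I.sup' hI (u · s)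
  have hactive : ∀ x, (I.filter fun i => u i x = f x).Nonempty := fun x => by
    obtain ⟨i, hi, he⟩ := I.exists_mem_eq_sup' hI (u · x)
    exact ⟨i, Finset.mem_filter.2 ⟨hi, he.symm⟩⟩
  set f' := fun x => (I.filter fun i => u i x = f x).sup' (hactive x) (d · x)
  have hf : ContinuousOn f (Icc a b) := ContinuousOn.finset_sup'_apply hI fun i hi x hx =>
    (hu i hi x hx).continuousAt.continuousWithinAt
  have hslope : ∀ x ∈ Ico a b, ∀ r, f' x < r → ∃ᶠ y in 𝓝[>] x, slope f x y < r :=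
    fun x hx r hr => (eventually_slope_finset_sup'_lt hI
      (fun i hi => hu i hi x (Ico_subset_Icc_self hx)) fun i hi hact =>
        (Finset.le_sup' (d · x) (Finset.mem_filter.2 ⟨hi, hact⟩)).trans_lt hr).frequently
  have hbound : ∀ x ∈ Ico a b, f x = 0 → f' x < 0 := fun x hx hfx =>
    (Finset.sup'_lt_iff _).2 fun i hi => by
      obtain ⟨hi, hact⟩ := Finset.mem_filter.1 hi
      exact hcontact x hx (fun j hj => hfx ▸ I.le_sup' (u · x) hj) i hi (hact.trans hfx)
  intro x hx i hi
  exact (I.le_sup' (u · x) hi).trans <| image_le_of_liminf_slope_right_lt_deriv_boundary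
    hf hslope (Finset.sup'_le hI _ ha) (fun _ => hasDerivAt_const _ 0) hbound hx

noncomputable def transportBarrier (M : ℝ) (β N : ℕ) (t : ℝ) (k : ℕ) : ℝ :=
  M * Real.exp (M * t) * (k : ℝ) ^ β / (N : ℝ) ^ 2

section transportBarrier

variable {M : ℝ} {β N : ℕ}

lemma hasDerivAt_transportBarrier (k : ℕ) (t : ℝ) :
    HasDerivAt (transportBarrier M β N · k) (M * transportBarrier M β N t k) t :=
  (((((hasDerivAt_id t).const_mul M).exp.const_mul M).mul_const ((k : ℝ) ^ β)).div_const
    ((N : ℝ) ^ 2)).congr_deriv (by simp only [transportBarrier, id, mul_one]; ring)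

lemma le_transportBarrier_zero {C : ℝ} {k : ℕ} (hβ : 2 ≤ β) (hk : 1 ≤ k) (hM : 0 ≤ M)
    (hC : C ≤ M) : C * (k : ℝ) ^ 2 / (N : ℝ) ^ 2 ≤ transportBarrier M β N 0 k := by
  have hk : (1 : ℝ) ≤ k := by exact_mod_cast hk
  rw [transportBarrier, mul_zero, exp_zero, mul_one]
  gcongr

lemma le_transportBarrier_of_half_lt {c C t : ℝ} {k : ℕ} (hβ : 2 ≤ β) (hN : 0 < N)
    (hk : (N : ℝ) / 2 < k) (ht : 0 ≤ t) (hC : 0 ≤ C) (hcM : c ≤ M) (hCM : 2 ^ β * C ≤ M) :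
    C * Real.exp (c * t) * (N : ℝ) ^ (β - 2) ≤ transportBarrier M β N t k := by
  have hN : (0 : ℝ) < N := by exact_mod_cast hN
  have hNk : (N : ℝ) ^ β ≤ 2 ^ β * (k : ℝ) ^ β := by
    rw [← mul_pow]; gcongr; linarith
  calc C * Real.exp (c * t) * (N : ℝ) ^ (β - 2)
      = C * Real.exp (c * t) * (N : ℝ) ^ β / (N : ℝ) ^ 2 := by
        rw [eq_div_iff (by positivity), mul_assoc, ← pow_add, Nat.sub_add_cancel hβ]
    _ ≤ C * Real.exp (M * t) * (2 ^ β * (k : ℝ) ^ β) / (N : ℝ) ^ 2 := by gcongr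
    _ = 2 ^ β * C * Real.exp (M * t) * (k : ℝ) ^ β / (N : ℝ) ^ 2 := by ring
    _ ≤ transportBarrier M β N t k := by unfold transportBarrier; gcongr

lemma transport_rhs_lt_deriv_transportBarrier {c t zj zj₁ : ℝ} {j : ℕ} (hβ : 1 ≤ β)
    (hN : 0 < N) (hj : 1 ≤ j) (ht : 0 ≤ t) (hc : 0 ≤ c) (hM : 1 + c * (3 + β * 2 ^ (β - 1)) ≤ M)
    (hzj : zj = transportBarrier M β N t j) (hzj₁ : zj₁ ≤ transportBarrier M β N t (j + 1)) :
    c * zj + c * j * (zj₁ - zj) + c * (j : ℝ) ^ β / (N : ℝ) ^ 2 + c / (N : ℝ) ^ 2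
      < M * transportBarrier M β N t j := by
  have hj : (1 : ℝ) ≤ j := by exact_mod_cast hj
  have hN : (0 : ℝ) < (N : ℝ) ^ 2 := by positivity
  set A := M * Real.exp (M * t)
  set P := (j : ℝ) ^ β
  set D : ℝ := β * 2 ^ (β - 1)
  have hM1 : 1 ≤ M := le_trans (le_add_of_nonneg_right (by positivity)) hM
  have hA : 1 ≤ A := one_le_mul_of_one_le_of_one_le hM1 (one_le_exp (by positivity))
  have hAP : 1 ≤ A * P := one_le_mul_of_one_le_of_one_le hA (one_le_pow₀ hj)
  have hw : transportBarrier M β N t j = A * P / N ^ 2 := rfl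
  have hw₁ : transportBarrier M β N t (j + 1) = A * (j + 1) ^ β / N ^ 2 := by
    simp [transportBarrier, A]
  rw [hw] at hzj ⊢
  subst hzj
  have hstep : j * ((j + 1) ^ β - P) ≤ D * P := by
    calc (j : ℝ) * ((j + 1) ^ β - P) ≤ j * (2 ^ (β - 1) * β * (j : ℝ) ^ (β - 1)) := by
          gcongr; exact add_one_pow_sub_pow_le hj β
      _ = D * P := by simp only [D, P]; rw [← mul_pow_sub_one (by omega : β ≠ 0)]; ring
  have hcoupling : c * j * (zj₁ - A * P / N ^ 2) ≤ c * D * (A * P) / N ^ 2 := by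
    calc c * j * (zj₁ - A * P / N ^ 2) ≤ c * j * (A * ((j + 1) ^ β - P) / N ^ 2) := by
          gcongr; rw [mul_sub, sub_div, ← hw₁]; linarith
      _ = c * A * (j * ((j + 1) ^ β - P)) / N ^ 2 := by ring
      _ ≤ c * A * (D * P) / N ^ 2 := by gcongr
      _ = c * D * (A * P) / N ^ 2 := by ring
  have hsources : c * (A * P) + c * D * (A * P) + c * P + c < M * (A * P) := by
    have : c * P ≤ c * (A * P) := by gcongr; exact le_mul_of_one_le_left (by positivity) hA
    have : c ≤ c * (A * P) := le_mul_of_one_le_right hc hAP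
    nlinarith
  calc c * (A * P / N ^ 2) + c * j * (zj₁ - A * P / N ^ 2) + c * P / N ^ 2 + c / N ^ 2
      ≤ (c * (A * P) + c * D * (A * P) + c * P + c) / N ^ 2 := by
        have : (c * (A * P) + c * D * (A * P) + c * P + c) / N ^ 2
            = c * (A * P / N ^ 2) + c * D * (A * P) / N ^ 2 + c * P / N ^ 2 + c / N ^ 2 := by ring
        linarith
    _ < M * (A * P / N ^ 2) := by rw [← mul_div_assoc]; gcongr

end transportBarrier

lemma succ_mem_Icc_of_le_half {N j : ℕ} (hN : 2 ≤ N) (hjN : (j : ℝ) ≤ N / 2) :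
    j + 1 ∈ Finset.Icc 1 N := by
  have hN : (2 : ℝ) ≤ N := by exact_mod_cast hN
  have : ((j + 1 : ℕ) : ℝ) ≤ N := by push_cast; linarith
  exact Finset.mem_Icc.2 ⟨by omega, by exact_mod_cast this⟩

theorem le_transportBarrier_of_transport_ineq {β N : ℕ} {c C0' C1 M : ℝ} (hβ : 2 ≤ β)
    (hN : 2 ≤ N) (hc : 0 ≤ c) (hC0' : 0 ≤ C0') (hC1 : 0 ≤ C1)
    (hM : 1 + c * (3 + β * 2 ^ (β - 1)) + C0' + 2 ^ β * C1 ≤ M) {z z' : ℕ → ℝ → ℝ}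
    (hz : ∀ k ∈ Finset.Icc 1 N, ∀ t : ℝ, 0 ≤ t → HasDerivAt (z k) (z' k t) t)
    (hode : ∀ k ∈ Finset.Icc 1 N, (k : ℝ) ≤ N / 2 → ∀ t : ℝ, 0 ≤ t →
      z' k t ≤ c * z k t + c * k * (z (k + 1) t - z k t) + c * (k : ℝ) ^ β / (N : ℝ) ^ 2
        + c / (N : ℝ) ^ 2)
    (hinit : ∀ k ∈ Finset.Icc 1 N, (k : ℝ) ≤ N / 2 → z k 0 ≤ C0' * (k : ℝ) ^ 2 / (N : ℝ) ^ 2)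
    (hbdry : ∀ k ∈ Finset.Icc 1 N, (N : ℝ) / 2 < k → ∀ t : ℝ, 0 ≤ t →
      z k t ≤ C1 * Real.exp (c * t) * (N : ℝ) ^ (β - 2)) :
    ∀ t : ℝ, 0 ≤ t → ∀ k ∈ Finset.Icc 1 N, z k t ≤ transportBarrier M β N t k := by
  have hcD : 3 * c ≤ c * (3 + β * 2 ^ (β - 1)) := by
    nlinarith [show (0 : ℝ) ≤ β * 2 ^ (β - 1) by positivity]
  have h2C1 : 0 ≤ 2 ^ β * C1 := by positivity
  have hN0 : 0 < N := by omega
  have houter : ∀ k ∈ Finset.Icc 1 N, (N : ℝ) / 2 < k → ∀ t, 0 ≤ t →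
      z k t ≤ transportBarrier M β N t k := fun k hk hhalf t ht =>
    (hbdry k hk hhalf t ht).trans
      (le_transportBarrier_of_half_lt hβ hN0 hhalf ht hC1 (by linarith) (by linarith))
  intro t ht k hk
  rcases lt_or_ge ((N : ℝ) / 2) k with hhalf | hhalf
  · exact houter k hk hhalf t ht
  set I := (Finset.Icc 1 N).filter fun j : ℕ => (j : ℝ) ≤ N / 2
  refine sub_nonpos.1 <| nonpos_of_deriv_neg_at_contact (I := I) (a := 0) (b := t)
    (u := fun j s => z j s - transportBarrier M β N s j)
    (d := fun j s => z' j s - M * transportBarrier M β N s j) ?_ ?_ ?_ t ⟨ht, le_rfl⟩ k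
    (Finset.mem_filter.2 ⟨hk, hhalf⟩)
  · intro j hj s hs
    exact (hz j (Finset.mem_filter.1 hj).1 s hs.1).sub (hasDerivAt_transportBarrier j s)
  · intro j hj
    obtain ⟨hj, hjhalf⟩ := Finset.mem_filter.1 hj
    exact sub_nonpos.2 <| (hinit j hj hjhalf).trans <|
      le_transportBarrier_zero hβ (Finset.mem_Icc.1 hj).1 (by linarith) (by linarith)
  · intro s hs hbelow j hj hcontact
    obtain ⟨hj, hjhalf⟩ := Finset.mem_filter.1 hj
    have hj₁ := succ_mem_Icc_of_le_half hN hjhalf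
    have hz₁ : z (j + 1) s ≤ transportBarrier M β N s (j + 1) := by
      rcases lt_or_ge ((N : ℝ) / 2) ((j + 1 : ℕ) : ℝ) with h | h
      · exact houter _ hj₁ h s hs.1
      · exact sub_nonpos.1 (hbelow _ (Finset.mem_filter.2 ⟨hj₁, h⟩))
    exact sub_neg.2 <| (hode j hj hjhalf s hs.1).trans_lt <|
      transport_rhs_lt_deriv_transportBarrier (by omega) hN0 (Finset.mem_Icc.1 hj).1 hs.1 hc
        (by linarith) (sub_eq_zero.1 hcontact) hz₁

/-- Comparison supersolution for the discrete transport hierarchy (Step 4.1 of the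
entropic hierarchy proof): under the discrete transport differential inequalities
for `k ≤ N/2` and the boundary bounds, `z^k(t) ≤ M e^{Mt} k^β/N²` for some `M`
depending only on `β, c, C0', C1`. -/
theorem discrete_transport_supersolution
    (β : ℕ) (hβ : 2 ≤ β) (c C0' C1 : ℝ) (hc : 0 ≤ c) (hC0' : 0 ≤ C0') (hC1 : 0 ≤ C1) :
    ∃ M > 0, ∀ N : ℕ, 2 ≤ N → ∀ z z' : ℕ → ℝ → ℝ,
      (∀ k ∈ Finset.Icc 1 N, ∀ t : ℝ, 0 ≤ t → 0 ≤ z k t) →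
      (∀ k ∈ Finset.Icc 1 N, ∀ t : ℝ, 0 ≤ t → HasDerivAt (fun s => z k s) (z' k t) t) →
      (∀ k ∈ Finset.Icc 1 N, ∀ t : ℝ, 0 ≤ t → ContinuousWithinAt (z' k) (Set.Ici 0) t) →
      (∀ k ∈ Finset.Icc 1 N, (k : ℝ) ≤ (N : ℝ) / 2 → ∀ t : ℝ, 0 ≤ t →
        z' k t ≤ c * z k t + c * (k : ℝ) * (z (k + 1) t - z k t)
          + c * (k : ℝ) ^ β / (N : ℝ) ^ 2 + c / (N : ℝ) ^ 2) →
      (∀ k ∈ Finset.Icc 1 N, (k : ℝ) ≤ (N : ℝ) / 2 →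
        z k 0 ≤ C0' * (k : ℝ) ^ 2 / (N : ℝ) ^ 2) →
      (∀ k ∈ Finset.Icc 1 N, (N : ℝ) / 2 < (k : ℝ) → ∀ t : ℝ, 0 ≤ t →
        z k t ≤ C1 * Real.exp (c * t) * (N : ℝ) ^ (β - 2)) →
      ∀ t : ℝ, 0 ≤ t → ∀ k ∈ Finset.Icc 1 N,
        z k t ≤ M * Real.exp (M * t) * (k : ℝ) ^ β / (N : ℝ) ^ 2 :=
  ⟨_, by positivity, fun _ hN _ _ _ hz _ hode hinit hbdry =>
    le_transportBarrier_of_transport_ineq hβ hN hc hC0' hC1 le_rfl hz hode hinit hbdry⟩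
end

section
/- Telescoping cancellation of dissipation: Let c1 > c2 ≥ 0, ρ ≥ 0, r ∈ [0, ρ(c1−c2)) (with r = 0 allowed when ρ = 0), α > 1, and let i0 ≥ 1 be such that i0^α/(i0+1)^α ≥ (c2 + r/ρ)/c1 (interpreting r/ρ = 0 when ρ = r = 0). Then for any nonnegative reals y^k, …, y^N and x^k, …, x^N with y^i ≥ ρ x^i for all i, one has −Σ_{i=k}^{N} c1 y^i/(i−k+i0)^α + Σ_{i=k}^{N−1} c2 y^{i+1}/(i−k+i0)^α ≤ −r Σ_{i=k}^{N} x^i/(i−k+i0)^α. -/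
/-!
Re-indexing the second sum, the coefficient of `y^i` on the left is `-c1 / i0^α` for `i = k` and
`-c1 / (j + 1)^α + c2 / j^α` with `j = i - 1 - k + i0 ≥ i0` for `k < i ≤ N`. Since
`j ↦ j^α / (j + 1)^α` increases, the choice of `i0` gives `c2 + r/ρ ≤ c1 j^α / (j + 1)^α` for every
`j ≥ i0`, which bounds each coefficient by `-(r/ρ)` times the weight of `y^i`; finally `(r/ρ) y^i ≥ r x^i`.
-/

open Finset

theorem sum_Icc_add_sum_Ico_le_sum_Icc {M : Type*} [AddCommMonoid M] [PartialOrder M]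
    [IsOrderedAddMonoid M] {a b c : ℕ → M} {k N : ℕ} (hkN : k ≤ N) (hbase : a k ≤ c k)
    (hstep : ∀ i ∈ Ico k N, a (i + 1) + b i ≤ c (i + 1)) :
    ∑ i ∈ Icc k N, a i + ∑ i ∈ Ico k N, b i ≤ ∑ i ∈ Icc k N, c i := by
  induction N, hkN using Nat.le_induction with
  | base => simpa using hbase
  | succ N hkN ih =>
    rw [sum_Icc_succ_top (by omega), sum_Ico_succ_top hkN, sum_Icc_succ_top (by omega),
      add_add_add_comm]
    exact add_le_add (ih fun i hi => hstep i (Ico_subset_Ico_right N.le_succ hi))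
      (hstep N (by simpa using hkN))

theorem mul_le_div_mul_of_mul_le {r ρ x y : ℝ} (hρ : 0 ≤ ρ) (hr : 0 ≤ r) (hρr : ρ = 0 → r = 0)
    (h : ρ * x ≤ y) : r * x ≤ r / ρ * y := by
  rcases hρ.eq_or_lt with rfl | hρ
  · simp [hρr rfl]
  · calc r * x = r / ρ * (ρ * x) := by field_simp
      _ ≤ r / ρ * y := mul_le_mul_of_nonneg_left h (div_nonneg hr hρ.le)

theorem rpow_div_rpow_add_one_le {α m n : ℝ} (hα : 0 ≤ α) (hm : 0 ≤ m) (hmn : m ≤ n) :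
    m ^ α / (m + 1) ^ α ≤ n ^ α / (n + 1) ^ α := by
  have hn : 0 ≤ n := hm.trans hmn
  rw [← Real.div_rpow hm (by positivity), ← Real.div_rpow hn (by positivity)]
  refine Real.rpow_le_rpow (by positivity) ?_ hα
  rw [div_le_div_iff₀ (by positivity) (by positivity)]
  linarith

theorem rpow_div_rpow_add_one_le_one {α m : ℝ} (hα : 0 ≤ α) (hm : 0 ≤ m) :
    m ^ α / (m + 1) ^ α ≤ 1 :=
  div_le_one_of_le₀ (Real.rpow_le_rpow hm (by linarith) hα) (by positivity)

theorem le_mul_rpow_div_rpow_add_one_of_div_le {a c α : ℝ} {i0 j : ℕ} (hα : 0 ≤ α) (hc : 0 < c)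
    (hj : i0 ≤ j) (h : a / c ≤ (i0 : ℝ) ^ α / ((i0 + 1 : ℕ) : ℝ) ^ α) :
    a ≤ c * ((j : ℝ) ^ α / ((j : ℝ) + 1) ^ α) := by
  rw [div_le_iff₀' hc, Nat.cast_succ] at h
  exact h.trans (mul_le_mul_of_nonneg_left
    (rpow_div_rpow_add_one_le hα (Nat.cast_nonneg _) (by exact_mod_cast hj)) hc.le)

theorem neg_div_rpow_add_one_add_div_rpow_le {c1 c2 r s α j x y : ℝ} (hα : 0 ≤ α) (hj : 0 < j)
    (hs : 0 ≤ s) (hy : 0 ≤ y) (hxy : r * x ≤ s * y)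
    (hcond : c2 + s ≤ c1 * (j ^ α / (j + 1) ^ α)) :
    -(c1 * y / (j + 1) ^ α) + c2 * y / j ^ α ≤ -r * (x / (j + 1) ^ α) := by
  have hp : 0 < j ^ α := Real.rpow_pos_of_pos hj α
  have hq : 0 < (j + 1) ^ α := Real.rpow_pos_of_pos (by linarith) α
  have hpq : j ^ α ≤ (j + 1) ^ α := Real.rpow_le_rpow hj.le (by linarith) hα
  have hcoef : c2 * (j + 1) ^ α + s * j ^ α ≤ c1 * j ^ α := by
    rw [← mul_div_assoc, le_div_iff₀ hq] at hcond
    nlinarith [mul_le_mul_of_nonneg_left hpq hs]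
  have hweighted : c2 * y / j ^ α + s * y / (j + 1) ^ α ≤ c1 * y / (j + 1) ^ α := by
    rw [div_add_div _ _ hp.ne' hq.ne', div_le_div_iff₀ (by positivity) hq]
    nlinarith [mul_le_mul_of_nonneg_right hcoef hy]
  have hxy' : r * x / (j + 1) ^ α ≤ s * y / (j + 1) ^ α := by gcongr
  rw [neg_mul, mul_div_assoc']
  linarith

theorem telescoping_dissipation_cancellation_general
    (c1 c2 ρ r α : ℝ) (N k : ℕ) (i0 : ℕ)
    (hc : c1 > c2) (hc2 : 0 ≤ c2) (hρ : 0 ≤ ρ) (hr0 : 0 ≤ r)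
    (hr : r = 0 ∨ r < ρ * (c1 - c2))
    (hα : 1 < α) (hi0 : 1 ≤ i0)
    (hi0cond : ((i0 : ℝ) ^ α) / ((i0 + 1 : ℕ) : ℝ) ^ α ≥ (c2 + r / ρ) / c1)
    (hkN : k ≤ N) (hk : 1 ≤ k)
    (x y : ℕ → ℝ)
    (hy : ∀ i ∈ Finset.Icc k N, 0 ≤ y i)
    (hyx : ∀ i ∈ Finset.Icc k N, ρ * x i ≤ y i) :
    -∑ i ∈ Finset.Icc k N, c1 * y i / ((i - k + i0 : ℕ) : ℝ) ^ α
      + ∑ i ∈ Finset.Icc k (N - 1), c2 * y (i + 1) / ((i - k + i0 : ℕ) : ℝ) ^ α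
      ≤ -r * ∑ i ∈ Finset.Icc k N, x i / ((i - k + i0 : ℕ) : ℝ) ^ α := by
  set s := r / ρ
  have hc1 : 0 < c1 := hc2.trans_lt hc
  have hα0 : 0 ≤ α := by linarith
  have hs : 0 ≤ s := div_nonneg hr0 hρ
  have hρr : ρ = 0 → r = 0 := fun hρ0 =>
    hr.resolve_right (by rw [hρ0, zero_mul]; exact not_lt.2 hr0)
  have hrxy : ∀ i ∈ Icc k N, r * x i ≤ s * y i := fun i hi =>
    mul_le_div_mul_of_mul_le hρ hr0 hρr (hyx i hi)
  have hcond : ∀ j : ℕ, i0 ≤ j → c2 + s ≤ c1 * ((j : ℝ) ^ α / ((j : ℝ) + 1) ^ α) :=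
    fun j hj => le_mul_rpow_div_rpow_add_one_of_div_le hα0 hc1 hj hi0cond
  have hsc1 : s ≤ c1 := by
    nlinarith [hcond i0 le_rfl, rpow_div_rpow_add_one_le_one hα0 (Nat.cast_nonneg (α := ℝ) i0)]
  have hN : ¬IsMin N := not_isMin_iff_ne_bot.2 (Nat.pos_iff_ne_zero.1 (hk.trans hkN))
  rw [Icc_sub_one_right_eq_Ico_of_not_isMin hN, ← sum_neg_distrib, mul_sum]
  refine sum_Icc_add_sum_Ico_le_sum_Icc hkN ?_ fun i hi => ?_
  · have hk' : k ∈ Icc k N := left_mem_Icc.2 hkN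
    have hxy : r * x k ≤ c1 * y k := (hrxy k hk').trans (by nlinarith [hy k hk'])
    have : (0 : ℝ) < (i0 : ℝ) ^ α := Real.rpow_pos_of_pos (by positivity) α
    rw [Nat.sub_self, zero_add, neg_mul, mul_div_assoc', neg_le_neg_iff]
    gcongr
  · obtain ⟨hki, hiN⟩ := mem_Ico.1 hi
    have hi1 : i + 1 ∈ Icc k N := mem_Icc.2 ⟨by omega, hiN⟩
    have hshift : i + 1 - k + i0 = i - k + i0 + 1 := by omega
    rw [hshift, Nat.cast_succ]
    exact neg_div_rpow_add_one_add_div_rpow_le hα0 (by positivity) hs (hy _ hi1) (hrxy _ hi1)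
      (hcond _ (by omega))

/-- Telescoping cancellation of dissipation in the entropic ODE hierarchy:
`-∑_{i=k}^N c1 y^i/(i-k+i0)^α + ∑_{i=k}^{N-1} c2 y^{i+1}/(i-k+i0)^α
  ≤ -r ∑_{i=k}^N x^i/(i-k+i0)^α`. -/
theorem telescoping_dissipation_cancellation
    (c1 c2 ρ r α : ℝ) (N k : ℕ) (i0 : ℕ)
    (hc : c1 > c2) (hc2 : 0 ≤ c2) (hρ : 0 ≤ ρ) (hr0 : 0 ≤ r)
    (hr : r = 0 ∨ r < ρ * (c1 - c2))
    (hα : 1 < α) (hi0 : 1 ≤ i0)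
    (hi0cond : ((i0 : ℝ) ^ α) / ((i0 + 1 : ℕ) : ℝ) ^ α ≥ (c2 + r / ρ) / c1)
    (hkN : k ≤ N) (hk : 1 ≤ k)
    (x y : ℕ → ℝ)
    (hx : ∀ i ∈ Finset.Icc k N, 0 ≤ x i)
    (hy : ∀ i ∈ Finset.Icc k N, 0 ≤ y i)
    (hyx : ∀ i ∈ Finset.Icc k N, ρ * x i ≤ y i) :
    -∑ i ∈ Finset.Icc k N, c1 * y i / ((i - k + i0 : ℕ) : ℝ) ^ α
      + ∑ i ∈ Finset.Icc k (N - 1), c2 * y (i + 1) / ((i - k + i0 : ℕ) : ℝ) ^ α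
      ≤ -r * ∑ i ∈ Finset.Icc k N, x i / ((i - k + i0 : ℕ) : ℝ) ^ α :=
  telescoping_dissipation_cancellation_general c1 c2 ρ r α N k i0 hc hc2 hρ hr0 hr hα hi0 hi0cond
    hkN hk x y hy hyx
end
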